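/- arXiv:1302.6346 — 3 statements merged into one kernel-verified Lean document; each statement's English description precedes it below -/
import Mathlib

section
/- If f : {0,1}^V → {0,1}^V is non-expansive (i.e., Hamming distance d(f(x),f(y)) ≤ d(x,y) for all x,y) and its asynchronous state graph has a cyclic attractor (an attractor containing at least two points), then f has no fixed point. -/
/-!
Let `x` be a fixed point and `a` a point of the attractor closest to `x`. Every arc out of `a`
stays in the attractor, so by minimality it flips only coordinates where `a` already agrees with
`x`. Since the attractor has two points, `a` has such an arc, and then `f a` differs from `x` on
every coordinate where `a` does and on at least one more: `d(f a, f x) = d(f a, x) > d(a, x)`,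
contradicting non-expansiveness.
-/

/-- Arc of the asynchronous state graph: `x → x ⊕ e_i` whenever `f_i(x) ≠ x_i`. -/
def asynArc {W : Type*} [DecidableEq W] (f : (W → Bool) → (W → Bool))
    (x y : W → Bool) : Prop :=
  ∃ i, f x i ≠ x i ∧ y = Function.update x i (!(x i))

/-- An attractor is a terminal strongly connected component of the asynchronous state
graph: a nonempty set, strongly connected, and closed under reachability. -/
def IsAttractor {W : Type*} [DecidableEq W] (f : (W → Bool) → (W → Bool))
    (A : Set (W → Bool)) : Prop :=
  A.Nonempty ∧ (∀ x ∈ A, ∀ y ∈ A, Relation.ReflTransGen (asynArc f) x y) ∧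
    (∀ x ∈ A, ∀ y, Relation.ReflTransGen (asynArc f) x y → y ∈ A)

section Hamming

variable {ι : Type*} [Fintype ι] {β : ι → Type*} [∀ i, DecidableEq (β i)]

theorem hammingDist_lt_of_ne_of_forall_ne_imp_eq {a x y : ∀ i, β i}
    (hagree : ∀ j, y j ≠ a j → a j = x j) (hya : y ≠ a) :
    hammingDist a x < hammingDist y x := by
  obtain ⟨i, hi⟩ := Function.ne_iff.mp hya
  refine Finset.card_lt_card ⟨fun j hj => ?_, fun hsub => ?_⟩
  · simp only [Finset.mem_filter, Finset.mem_univ, true_and] at hj ⊢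
    by_cases hyj : y j = a j
    · rwa [hyj]
    · exact absurd (hagree j hyj) hj
  · have hyi : y i ≠ x i := hagree i hi ▸ hi
    have := hsub (by simpa using hyi)
    simp only [Finset.mem_filter, Finset.mem_univ, true_and] at this
    exact this (hagree i hi)

theorem hammingDist_update_lt [DecidableEq ι] {a x : ∀ i, β i} {i : ι} (hi : a i ≠ x i) :
    hammingDist (Function.update a i (x i)) x < hammingDist a x := by
  refine hammingDist_lt_of_ne_of_forall_ne_imp_eq (fun j hj => ?_) fun h => ?_
  · by_cases hji : j = i
    · subst hji; simp
    · exact absurd (Function.update_of_ne hji _ _).symm hj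
  · exact hi (by simpa using congrFun h i)

end Hamming

namespace IsAttractor

variable {W : Type*} [DecidableEq W] {f : (W → Bool) → (W → Bool)} {A : Set (W → Bool)}

theorem update_mem (hA : IsAttractor f A) {a : W → Bool} (ha : a ∈ A) {i : W}
    (hi : f a i ≠ a i) : Function.update a i (!(a i)) ∈ A :=
  hA.2.2 a ha _ (.single ⟨i, hi, rfl⟩)

theorem exists_apply_ne (hA : IsAttractor f A) (hcyc : ∃ a ∈ A, ∃ b ∈ A, a ≠ b)
    {a : W → Bool} (ha : a ∈ A) : ∃ i, f a i ≠ a i := by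
  obtain ⟨b, hb, c, hc, hbc⟩ := hcyc
  obtain ⟨d, hd, had⟩ : ∃ d ∈ A, a ≠ d := by
    by_cases hab : a = b
    · exact ⟨c, hc, hab ▸ hbc⟩
    · exact ⟨b, hb, hab⟩
  rcases (hA.2.1 a ha d hd).cases_head with rfl | ⟨_, ⟨i, hi, _⟩, _⟩
  · exact absurd rfl had
  · exact ⟨i, hi⟩

theorem apply_eq_of_apply_ne_of_isClosest [Fintype W] (hA : IsAttractor f A) {a x : W → Bool}
    (ha : a ∈ A) (hclosest : ∀ b ∈ A, hammingDist a x ≤ hammingDist b x) {i : W}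
    (hi : f a i ≠ a i) : a i = x i := by
  by_contra hax
  have hflip : (!(a i)) = x i := by
    cases h : a i <;> cases h' : x i <;> simp_all
  have := hclosest _ (hA.update_mem ha hi)
  rw [hflip] at this
  exact (hammingDist_update_lt hax).not_ge this

end IsAttractor

theorem stmt_3 {V : Type*} [Fintype V] [DecidableEq V]
    (f : (V → Bool) → (V → Bool))
    (hne : ∀ x y : V → Bool, hammingDist (f x) (f y) ≤ hammingDist x y)
    (A : Set (V → Bool)) (hA : IsAttractor f A)
    (hcyc : ∃ a ∈ A, ∃ b ∈ A, a ≠ b) :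
    ∀ x : V → Bool, f x ≠ x := by
  intro x hx
  obtain ⟨a, ha, hclosest⟩ := A.exists_min_image (hammingDist · x) A.toFinite hA.1
  obtain ⟨i, hi⟩ := hA.exists_apply_ne hcyc ha
  have hfar : hammingDist a x < hammingDist (f a) x :=
    hammingDist_lt_of_ne_of_forall_ne_imp_eq
      (fun j hj => hA.apply_eq_of_apply_ne_of_isClosest ha hclosest hj)
      (Function.ne_iff.mpr ⟨i, hi⟩)
  have := hne a x
  rw [hx] at this
  exact hfar.not_ge this
end

section
/- If for every x ∈ {0,1}^V the local interaction graph Gf(x) has no directed cycle, then the map x ↦ f(x) ⊕ x is a bijection of {0,1}^V; in particular f has a unique fixed point. -/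
/-! If `x ≠ y` and `f x`, `f y` differed at every coordinate where `x` and `y` differ, then for
each such coordinate `j`, moving `x` one step towards `y` at `j` and using induction on the
Hamming distance gives another differing coordinate `i` with an arc `j → i` in `G_f(x)`. Every
vertex of the finite set of differing coordinates would then have an out-arc inside it, forcing a
cycle. So `f x` and `f y` agree somewhere `x` and `y` differ, which makes `x ↦ f x ⊕ x` injective,
hence bijective on the finite cube; the fixed points of `f` are its preimages of `0`. -/

/-- Arc `j → i` in the local interaction graph of `f` at `x`. -/
def localArc {W : Type*} [DecidableEq W] (f : (W → Bool) → (W → Bool))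
    (x : W → Bool) (j i : W) : Prop :=
  f (Function.update x j true) i ≠ f (Function.update x j false) i

/-- A relation `A` has a directed cycle. -/
def HasCycle {W : Type*} (A : W → W → Prop) : Prop :=
  ∃ (k : ℕ) (v : Fin (k + 1) → W), Function.Injective v ∧ ∀ t, A (v t) (v (t + 1))

/-- The conjugate of `f`: `x ↦ f(x) ⊕ x`. -/
def conjNet {W : Type*} (f : (W → Bool) → (W → Bool)) : (W → Bool) → (W → Bool) :=
  fun x i => xor (f x i) (x i)

open Function

theorem Function.exists_mem_periodicPts {α : Type*} [Finite α] (s : α → α) (a : α) :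
    ∃ z, z ∈ periodicPts s := by
  obtain ⟨m, n, hmn, heq⟩ := Finite.exists_ne_map_eq_of_infinite (s^[·] a)
  wlog hlt : m < n generalizing m n
  · exact this n m hmn.symm heq.symm (by omega)
  refine ⟨s^[m] a, mk_mem_periodicPts (n := n - m) (by omega) ?_⟩
  rw [IsPeriodicPt, IsFixedPt, ← iterate_add_apply, Nat.sub_add_cancel hlt.le]
  exact heq.symm

theorem HasCycle.map {T W : Type*} {B : T → T → Prop} {A : W → W → Prop} (hB : HasCycle B)
    (φ : T → W) (hφ : Injective φ) (h : ∀ t t', B t t' → A (φ t) (φ t')) : HasCycle A := by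
  obtain ⟨k, v, hv, hB⟩ := hB
  exact ⟨k, φ ∘ v, hφ.comp hv, fun t => h _ _ (hB t)⟩

-- The cycle is the orbit of a periodic point of a successor function.
theorem hasCycle_of_forall_exists {T : Type*} [Finite T] [Nonempty T] {A : T → T → Prop}
    (h : ∀ t, ∃ t', A t t') : HasCycle A := by
  choose s hs using h
  obtain ⟨z, hz⟩ := exists_mem_periodicPts s (Classical.arbitrary T)
  obtain ⟨k, hk⟩ := Nat.exists_eq_succ_of_ne_zero (minimalPeriod_pos_of_mem_periodicPts hz).ne'
  refine ⟨k, fun t => s^[t] z, fun t t' htt' => Fin.ext ?_, fun t => ?_⟩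
  · exact iterate_injOn_Iio_minimalPeriod (by simpa [hk] using t.isLt)
      (by simpa [hk] using t'.isLt) htt'
  · have hval : ((t + 1 : Fin (k + 1)) : ℕ) = (t + 1) % minimalPeriod s z := by
      rw [hk, Fin.val_add]; simp
    dsimp only
    rw [hval, iterate_mod_minimalPeriod_eq, iterate_succ_apply']
    exact hs _

theorem hammingDist_update_lt_s6 {ι : Type*} {β : ι → Type*} [Fintype ι] [DecidableEq ι]
    [∀ i, DecidableEq (β i)] {x y : ∀ i, β i} {j : ι} (h : x j ≠ y j) :
    hammingDist (update x j (y j)) y < hammingDist x y := by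
  refine Finset.card_lt_card <|
    (Finset.ssubset_iff_of_subset ?_).mpr ⟨j, by simpa using h, by simp⟩
  intro i
  by_cases hij : i = j
  · simp [hij]
  · simp [update_of_ne hij]

section

variable {V : Type*} [DecidableEq V] {f : (V → Bool) → (V → Bool)}

theorem localArc_of_update_ne {x : V → Bool} {j i : V} {b : Bool} (hb : x j ≠ b)
    (h : f x i ≠ f (update x j b) i) : localArc f x j i := by
  obtain rfl : b = !x j := Bool.eq_not.mpr hb.symm
  unfold localArc
  cases hxj : x j <;> simp only [hxj, Bool.not_true, Bool.not_false] at h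
  · rw [← hxj, update_eq_self]; exact h.symm
  · rw [← hxj, update_eq_self]; exact h

theorem exists_ne_and_apply_eq_of_acyclic [Fintype V]
    (hacyc : ∀ x : V → Bool, ¬ HasCycle (localArc f x)) {x y : V → Bool} (hxy : x ≠ y) :
    ∃ i, x i ≠ y i ∧ f x i = f y i := by
  induction hd : hammingDist x y using Nat.strong_induction_on generalizing x with
  | _ n ih =>
  by_contra! hfne
  have hstep : ∀ j : {j // x j ≠ y j}, ∃ i : {i // x i ≠ y i}, localArc f x j i := by
    rintro ⟨j, hj⟩
    by_cases hx' : update x j (y j) = y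
    · exact ⟨⟨j, hj⟩, localArc_of_update_ne hj (by rw [hx']; exact hfne j hj)⟩
    · obtain ⟨i, hi, hfi⟩ := ih _ (hd ▸ hammingDist_update_lt_s6 hj) hx' rfl
      have hij : i ≠ j := by rintro rfl; simp at hi
      rw [update_of_ne hij] at hi
      exact ⟨⟨i, hi⟩, localArc_of_update_ne hj (by rw [hfi]; exact hfne i hi)⟩
  have : Nonempty {j // x j ≠ y j} := let ⟨j, hj⟩ := ne_iff.mp hxy; ⟨⟨j, hj⟩⟩
  exact hacyc x <| (hasCycle_of_forall_exists hstep).map Subtype.val Subtype.val_injective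
    fun _ _ h => h

theorem conjNet_injective_of_acyclic [Fintype V]
    (hacyc : ∀ x : V → Bool, ¬ HasCycle (localArc f x)) : Injective (conjNet f) := by
  intro x y hxy
  by_contra hne
  obtain ⟨i, hi, hfi⟩ := exists_ne_and_apply_eq_of_acyclic hacyc hne
  exact hi (by simpa [conjNet, hfi] using congrFun hxy i)

end

theorem conjNet_eq_false_iff {W : Type*} {g : (W → Bool) → (W → Bool)} {x : W → Bool} :
    conjNet g x = (fun _ => false) ↔ g x = x := by
  simp [funext_iff, conjNet]

/-- Shih–Dong's theorem (with the bijection strengthening): if every local interaction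
graph is acyclic, then the conjugate of `f` is a bijection; in particular `f` has a
unique fixed point. -/
theorem stmt_6 {V : Type*} [Fintype V] [DecidableEq V]
    (f : (V → Bool) → (V → Bool))
    (hacyc : ∀ x : V → Bool, ¬ HasCycle (localArc f x)) :
    Function.Bijective (conjNet f) ∧ ∃! x : V → Bool, f x = x := by
  have hbij := Finite.injective_iff_bijective.mp (conjNet_injective_of_acyclic hacyc)
  exact ⟨hbij, by simpa only [conjNet_eq_false_iff] using hbij.existsUnique (fun _ => false)⟩
end

section
/- A Boolean network f is negative-circular (its global interaction graph is a cycle spanning all vertices with an odd number of negative arcs) if and only if f is odd-self-dual and non-expansive. -/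
/-- `f` is self-dual: `f(x ⊕ 1) = f(x) ⊕ 1`. -/
def SelfDual {W : Type*} (f : (W → Bool) → (W → Bool)) : Prop :=
  ∀ x, f (fun i => !(x i)) = fun i => !(f x i)

/-- A point has even parity if its number of `true` components is even. -/
def EvenPt {W : Type*} [Fintype W] (x : W → Bool) : Prop :=
  Even ((Finset.univ.filter (fun i => x i = true)).card)

/-- `f` is even: the image of its conjugate is exactly the set of even-parity points. -/
def IsEvenNet {W : Type*} [Fintype W] (f : (W → Bool) → (W → Bool)) : Prop :=
  Set.range (conjNet f) = {x | EvenPt x}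

/-- `f` is odd: the image of its conjugate is exactly the set of odd-parity points. -/
def IsOddNet {W : Type*} [Fintype W] (f : (W → Bool) → (W → Bool)) : Prop :=
  Set.range (conjNet f) = {x | ¬ EvenPt x}

/-- `f` is non-expansive for the Hamming distance. -/
def NonExpansive {W : Type*} [Fintype W] [DecidableEq W]
    (f : (W → Bool) → (W → Bool)) : Prop :=
  ∀ x y : W → Bool, hammingDist (f x) (f y) ≤ hammingDist x y

/-- Positive arc `j → i` in the global interaction graph of `f`. -/
def globalPos {W : Type*} [DecidableEq W] (f : (W → Bool) → (W → Bool)) (j i : W) : Prop :=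
  ∃ x, f (Function.update x j true) i = true ∧ f (Function.update x j false) i = false

/-- Negative arc `j → i` in the global interaction graph of `f`. -/
def globalNeg {W : Type*} [DecidableEq W] (f : (W → Bool) → (W → Bool)) (j i : W) : Prop :=
  ∃ x, f (Function.update x j true) i = false ∧ f (Function.update x j false) i = true

/-- The global interaction graph of `f` is a directed cycle spanning all vertices
(each vertex has in- and out-degree one): its arcs are exactly the arcs `σ i → i`,
with sign given by `s i` (`true` meaning negative). The permutation `σ` is required
to be a single cycle on all of `W`. -/
def IsCircularWith {W : Type*} [Fintype W] [DecidableEq W]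
    (f : (W → Bool) → (W → Bool)) (σ : Equiv.Perm W) (s : W → Bool) : Prop :=
  (∀ i j : W, ∃ n : ℕ, (σ ^ n) i = j) ∧
  (∀ i j : W, globalPos f j i ↔ (j = σ i ∧ s i = false)) ∧
  (∀ i j : W, globalNeg f j i ↔ (j = σ i ∧ s i = true))

/-- Number of negative arcs of a circular network with signs `s`. -/
def negCount {W : Type*} [Fintype W] (s : W → Bool) : ℕ :=
  (Finset.univ.filter (fun i => s i = true)).card

/-! Over Mathlib's Boolean ring structure on `Bool` (where `+` is `xor`), a network is circular
with signs `s` exactly when it is the signed permutation `x ↦ x ∘ σ + s` with `σ` a single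
cycle. Signed permutations are self-dual Hamming isometries, and the conjugate
`x ↦ (x ∘ σ + x) + s` has as image the points of parity `∑ s`: the additive map
`x ↦ x ∘ σ + x` has the constants as kernel when `σ` is one cycle, and lands in the even
points.

Conversely, `f y` and `f (¬y)` are antipodal for a self-dual `f`, so a non-expansive self-dual
network is injective, hence a bijection, hence (summing distances over all pairs) an isometry.
Isometries of the cube are signed permutations, since `x j = 1` iff `x` is closer to the unit
vector `e j` than to `0`. Finally, the parity of the conjugate restricted to a `σ`-orbit does not
depend on the point, so oddness forces `∑ s = 1` and `σ` to be a single cycle. -/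

open Function

theorem Bool.natCast_eq_zero_iff_even (n : ℕ) : (n : Bool) = 0 ↔ Even n := by
  induction n with
  | zero => simp
  | succ n ih =>
    rw [Nat.cast_succ, Nat.even_add_one, ← ih]
    cases (n : Bool) <;> decide

theorem Bool.add_eq_add_iff_add_eq_add {a b c d : Bool} : a + b = c + d ↔ a + c = b + d := by
  revert a b c d; decide

theorem hammingDist_add_right {ι β : Type*} [Fintype ι] [DecidableEq β] [Add β]
    [IsRightCancelAdd β] (x y c : ι → β) : hammingDist (x + c) (y + c) = hammingDist x y := by
  simp [hammingDist]

theorem hammingDist_comp_perm {ι β : Type*} [Fintype ι] [DecidableEq β] (x y : ι → β)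
    (σ : Equiv.Perm ι) : hammingDist (x ∘ σ) (y ∘ σ) = hammingDist x y :=
  Finset.card_equiv σ (by simp)

theorem Function.Bijective.map_eq_of_map_le {α M : Type*} [Fintype α] [AddCommMonoid M]
    [PartialOrder M] [IsOrderedCancelAddMonoid M] {f : α → α} (hf : Bijective f)
    {d : α → α → M} (h : ∀ x y, d (f x) (f y) ≤ d x y) (x y : α) :
    d (f x) (f y) = d x y := by
  have hsum : ∑ p : α × α, d (f p.1) (f p.2) = ∑ p : α × α, d p.1 p.2 :=
    Fintype.sum_bijective (Prod.map f f) (hf.prodMap hf) _ _ fun _ => rfl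
  exact (Finset.sum_eq_sum_iff_of_le fun p _ => h p.1 p.2).mp hsum (x, y) (Finset.mem_univ _)

theorem dependsOn_of_update_eq {ι β : Type*} [Fintype ι] [DecidableEq ι] {α : ι → Type*}
    {g : (Π i, α i) → β} {s : Set ι} (h : ∀ j ∉ s, ∀ x b, g (update x j b) = g x) :
    DependsOn g s := by
  intro x y hxy
  suffices key : ∀ T : Finset ι, ∀ x, (∀ i ∉ T, x i = y i) → (∀ i ∈ s, x i = y i) →
      g x = g y from
    key Finset.univ x (by simp) hxy
  intro T
  induction T using Finset.induction_on with
  | empty => exact fun x hx _ => congrArg g (funext fun i => hx i (Finset.notMem_empty i))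
  | insert j T _ ih =>
    intro x hx hs
    have hupd : g (update x j (y j)) = g x := by
      by_cases hj : j ∈ s
      · rw [← hs j hj, update_eq_self]
      · exact h j hj x (y j)
    rw [← hupd]
    refine ih _ (fun i hi => ?_) (fun i hi => ?_) <;> rcases eq_or_ne i j with rfl | hij
    all_goals simp_all

section BoolVectors

variable {V : Type*} [Fintype V]

theorem evenPt_iff_sum_eq_zero (x : V → Bool) : EvenPt x ↔ ∑ i, x i = 0 := by
  have hx : ∀ i, x i = if x i = true then 1 else 0 := fun i => by cases x i <;> rfl
  rw [EvenPt, ← Bool.natCast_eq_zero_iff_even, ← Finset.sum_boole,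
    Finset.sum_congr rfl fun i _ => (hx i).symm]

theorem not_evenPt_iff_sum_eq_one (x : V → Bool) : ¬ EvenPt x ↔ ∑ i, x i = 1 := by
  rw [evenPt_iff_sum_eq_zero]
  cases ∑ i, x i <;> decide

theorem odd_negCount_iff (s : V → Bool) : Odd (negCount s) ↔ ∑ i, s i = 1 := by
  rw [← not_evenPt_iff_sum_eq_one, ← Nat.not_even_iff_odd]
  rfl

theorem isOddNet_iff (f : (V → Bool) → (V → Bool)) :
    IsOddNet f ↔ Set.range (conjNet f) = {x | ∑ i, x i = 1} := by
  simp only [IsOddNet, not_evenPt_iff_sum_eq_one]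

theorem hammingDist_add_hammingDist_not (x y : V → Bool) :
    hammingDist x y + hammingDist x (fun i => !y i) = Fintype.card V := by
  have hnot : ∀ i, x i ≠ !y i ↔ ¬ x i ≠ y i := fun i => by
    cases x i <;> cases y i <;> decide
  simp only [hammingDist, hnot]
  exact Finset.card_filter_add_card_filter_not _

variable [DecidableEq V]

theorem hammingDist_single_lt_iff (x : V → Bool) (j : V) :
    hammingDist x (Pi.single j 1) < hammingNorm x ↔ x j = 1 := by
  have hrest :
      ∑ i ∈ Finset.univ.erase j, (if x i ≠ (Pi.single j 1 : V → Bool) i then 1 else 0) =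
        ∑ i ∈ Finset.univ.erase j, (if x i ≠ 0 then 1 else 0) :=
    Finset.sum_congr rfl fun i hi => by rw [Pi.single_eq_of_ne (Finset.ne_of_mem_erase hi)]
  simp only [hammingDist, hammingNorm, Finset.card_filter]
  rw [← Finset.add_sum_erase _ _ (Finset.mem_univ j),
    ← Finset.add_sum_erase _ _ (Finset.mem_univ j), hrest, Pi.single_eq_same]
  cases x j <;> simp +decide

theorem eq_single_of_hammingNorm_eq_one {x : V → Bool} (hx : hammingNorm x = 1) :
    ∃ i, x = Pi.single i 1 := by
  obtain ⟨i, hi⟩ := Finset.card_eq_one.mp hx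
  refine ⟨i, funext fun k => ?_⟩
  have hk := Finset.ext_iff.mp hi k
  simp only [Finset.mem_filter, Finset.mem_univ, true_and, Finset.mem_singleton] at hk
  by_cases hki : k = i
  · subst hki; simpa [Bool.zero_eq_false, Bool.one_eq_true] using hk
  · rw [Pi.single_eq_of_ne hki]; simpa [hki] using hk

end BoolVectors

section Cycles

variable {V : Type*} {σ : Equiv.Perm V}

theorem apply_eq_of_comp_eq (hσ : ∀ i j : V, ∃ n : ℕ, (σ ^ n) i = j) {x : V → Bool}
    (hx : x ∘ σ = x) (i j : V) : x i = x j := by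
  obtain ⟨n, rfl⟩ := hσ j i
  induction n with
  | zero => rfl
  | succ n ih => rw [pow_succ', Equiv.Perm.mul_apply, ← ih]; exact congrFun hx _

theorem exists_comp_add_eq [Fintype V] [DecidableEq V]
    (hσ : ∀ i j : V, ∃ n : ℕ, (σ ^ n) i = j) {d : V → Bool} (hd : ∑ i, d i = 0) :
    ∃ x, x ∘ σ + x = d := by
  rcases isEmpty_or_nonempty V with _ | ⟨⟨i₀⟩⟩
  · exact ⟨d, funext isEmptyElim⟩
  -- `Ψ x` recovers `x i₀` (as its parity) and `x ∘ σ + x`, whose kernel is the constants: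
  -- so `Ψ` is injective, hence onto.
  let Ψ : (V → Bool) → (V → Bool) := fun x => x ∘ σ + x + Pi.single i₀ (x i₀)
  have hΨ : ∀ x, ∑ i, Ψ x i = x i₀ := fun x => by
    simp only [Ψ, Pi.add_apply, comp_apply, Finset.sum_add_distrib, Equiv.sum_comp σ x,
      BooleanRing.add_self, zero_add, Finset.sum_pi_single', Finset.mem_univ, if_true]
  have hinj : Injective Ψ := by
    intro x y hxy
    have h₀ : x i₀ = y i₀ := by rw [← hΨ x, ← hΨ y, hxy]
    have hφ : x ∘ σ + x = y ∘ σ + y := by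
      simpa only [Ψ, h₀, add_left_inj] using hxy
    have hcomp : (x + y) ∘ σ = x + y := funext fun i =>
      Bool.add_eq_add_iff_add_eq_add.mp (congrFun hφ i)
    funext i
    rw [← BooleanRing.add_eq_zero', ← Pi.add_apply, apply_eq_of_comp_eq hσ hcomp i i₀,
      Pi.add_apply, h₀, BooleanRing.add_self]
  obtain ⟨x, hx⟩ := Finite.injective_iff_surjective.mp hinj d
  have hx₀ : x i₀ = 0 := by rw [← hΨ x, hx, hd]
  refine ⟨x, ?_⟩
  rw [← hx]
  simp [Ψ, hx₀]

end Cycles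

def IsSignedPerm {V : Type*} (f : (V → Bool) → (V → Bool)) (σ : Equiv.Perm V)
    (c : V → Bool) : Prop :=
  ∀ x i, f x i = x (σ i) + c i

namespace IsSignedPerm

variable {V : Type*} {f : (V → Bool) → (V → Bool)} {σ : Equiv.Perm V} {c : V → Bool}

theorem eq_comp_add (h : IsSignedPerm f σ c) (x : V → Bool) : f x = x ∘ σ + c :=
  funext (h x)

theorem selfDual (h : IsSignedPerm f σ c) : SelfDual f := fun x => funext fun i => by
  rw [h, h]
  cases x (σ i) <;> cases c i <;> rfl

theorem sum_conjNet (h : IsSignedPerm f σ c) {O : Finset V} (hO : ∀ i, i ∈ O ↔ σ i ∈ O)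
    (x : V → Bool) : ∑ i ∈ O, conjNet f x i = ∑ i ∈ O, c i := by
  have hperm : ∑ i ∈ O, x (σ i) = ∑ i ∈ O, x i := Finset.sum_equiv σ hO fun _ _ => rfl
  have hconj : ∀ i, conjNet f x i = x (σ i) + c i + x i := fun i => by rw [← h]; rfl
  simp only [hconj, Finset.sum_add_distrib, hperm]
  rw [add_right_comm, BooleanRing.add_self, zero_add]

section DecidableEq

variable [DecidableEq V]

theorem apply_update (h : IsSignedPerm f σ c) (x : V → Bool) (i j : V) (b : Bool) :
    f (update x j b) i = if j = σ i then b + c i else x (σ i) + c i := by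
  rw [h, update_apply]
  split_ifs with h₁ h₂ h₂
  · rfl
  · exact absurd h₁.symm h₂
  · exact absurd h₂.symm h₁
  · rfl

theorem globalPos_iff (h : IsSignedPerm f σ c) (i j : V) :
    globalPos f j i ↔ j = σ i ∧ c i = false := by
  simp only [globalPos, h.apply_update]
  by_cases hj : j = σ i <;> cases c i <;> simp [hj, Bool.add_eq_xor]

theorem globalNeg_iff (h : IsSignedPerm f σ c) (i j : V) :
    globalNeg f j i ↔ j = σ i ∧ c i = true := by
  simp only [globalNeg, h.apply_update]
  by_cases hj : j = σ i <;> cases c i <;> simp [hj, Bool.add_eq_xor]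

end DecidableEq

variable [Fintype V]

theorem hammingDist_eq (h : IsSignedPerm f σ c) (x y : V → Bool) :
    hammingDist (f x) (f y) = hammingDist x y := by
  rw [h.eq_comp_add, h.eq_comp_add, hammingDist_add_right, hammingDist_comp_perm]

theorem nonExpansive [DecidableEq V] (h : IsSignedPerm f σ c) : NonExpansive f := fun x y =>
  (h.hammingDist_eq x y).le

theorem isOddNet [DecidableEq V] (h : IsSignedPerm f σ c)
    (hσ : ∀ i j : V, ∃ n : ℕ, (σ ^ n) i = j) (hc : ∑ i, c i = 1) : IsOddNet f := by
  rw [isOddNet_iff]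
  refine Set.Subset.antisymm ?_ fun y (hy : ∑ i, y i = 1) => ?_
  · rintro _ ⟨x, rfl⟩
    exact (h.sum_conjNet (by simp) x).trans hc
  · obtain ⟨x, hx⟩ := exists_comp_add_eq hσ (d := y + c) (by
      simp only [Pi.add_apply, Finset.sum_add_distrib, hy, hc, BooleanRing.add_self])
    refine ⟨x, funext fun i => ?_⟩
    have hi := congrFun hx i
    simp only [Pi.add_apply, comp_apply] at hi
    show f x i + x i = y i
    rw [h, add_right_comm, hi, add_assoc, BooleanRing.add_self, add_zero]

theorem sum_eq_one_of_isOddNet (h : IsSignedPerm f σ c) (hf : IsOddNet f) : ∑ i, c i = 1 := by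
  have hmem : conjNet f 0 ∈ {x : V → Bool | ∑ i, x i = 1} := by
    rw [← (isOddNet_iff f).mp hf]; exact Set.mem_range_self 0
  rw [← h.sum_conjNet (by simp) 0]
  exact hmem

theorem exists_pow_apply_eq_of_isOddNet [DecidableEq V] (h : IsSignedPerm f σ c)
    (hf : IsOddNet f) : ∀ i j : V, ∃ n : ℕ, (σ ^ n) i = j := by
  by_contra! hne
  obtain ⟨i₀, j₀, hij⟩ := hne
  have hnot : ¬ σ.SameCycle i₀ j₀ := fun hs => by
    obtain ⟨n, hn⟩ := hs.exists_nat_pow_eq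
    exact hij n hn
  let O := Finset.univ.filter (σ.SameCycle i₀)
  have hO : ∀ i, i ∈ O ↔ σ i ∈ O := fun i => by simp [O, Equiv.Perm.sameCycle_apply_right]
  have hsingle : ∀ j, ∑ i ∈ O, c i = if j ∈ O then 1 else 0 := fun j => by
    have hj : Pi.single j 1 ∈ Set.range (conjNet f) := by
      rw [(isOddNet_iff f).mp hf]
      simp [Finset.sum_pi_single']
    obtain ⟨x, hx⟩ := hj
    rw [← h.sum_conjNet hO x, hx, Finset.sum_pi_single']
  have h₁ := hsingle i₀
  rw [hsingle j₀, if_neg (by simpa [O] using hnot),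
    if_pos (by simp [O, Equiv.Perm.SameCycle.refl])] at h₁
  exact absurd h₁ (by decide)

end IsSignedPerm

section Circular

variable {V : Type*} [DecidableEq V] {f : (V → Bool) → (V → Bool)}

theorem apply_update_eq_of_not_globalPos_of_not_globalNeg {i j : V} (hp : ¬ globalPos f j i)
    (hn : ¬ globalNeg f j i) (x : V → Bool) (b : Bool) : f (update x j b) i = f x i := by
  have hflip : f (update x j true) i = f (update x j false) i := by
    cases h₁ : f (update x j true) i <;> cases h₂ : f (update x j false) i
    exacts [rfl, (hn ⟨x, h₁, h₂⟩).elim, (hp ⟨x, h₁, h₂⟩).elim, rfl]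
  conv_rhs => rw [← update_eq_self j x]
  cases b <;> cases x j <;> simp only [hflip]

theorem IsCircularWith.isSignedPerm [Fintype V] {σ : Equiv.Perm V} {s : V → Bool}
    (h : IsCircularWith f σ s) : IsSignedPerm f σ s := by
  obtain ⟨-, hpos, hneg⟩ := h
  intro x i
  have hdep : DependsOn (fun x => f x i) {σ i} := dependsOn_of_update_eq fun j hj =>
    apply_update_eq_of_not_globalPos_of_not_globalNeg
      (fun hp => hj ((hpos i j).mp hp).1) (fun hn => hj ((hneg i j).mp hn).1)
  have hwitness : ∃ z : V → Bool, ∀ b, f (update z (σ i) b) i = b + s i := by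
    cases hs : s i
    · obtain ⟨z, h₁, h₂⟩ := (hpos i (σ i)).mpr ⟨rfl, hs⟩
      exact ⟨z, fun b => by cases b <;> assumption⟩
    · obtain ⟨z, h₁, h₂⟩ := (hneg i (σ i)).mpr ⟨rfl, hs⟩
      exact ⟨z, fun b => by cases b <;> assumption⟩
  obtain ⟨z, hz⟩ := hwitness
  rw [← hz]
  exact hdep fun k hk => by rw [Set.mem_singleton_iff.mp hk, update_self]

end Circular

section Isometries

variable {V : Type*} [Fintype V] [DecidableEq V] {f : (V → Bool) → (V → Bool)}

theorem SelfDual.injective (hsd : SelfDual f) (hne : NonExpansive f) : Injective f := by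
  intro x y hxy
  have hfar : hammingDist (f x) (f fun i => !y i) = Fintype.card V := by
    rw [hsd, hxy, ← hammingDist_add_hammingDist_not, hammingDist_self, zero_add]
  have hle := hne x fun i => !y i
  have hsum := hammingDist_add_hammingDist_not x y
  exact hammingDist_eq_zero.mp (by omega)

theorem exists_isSignedPerm_of_hammingDist_eq
    (hf : ∀ x y, hammingDist (f x) (f y) = hammingDist x y) :
    ∃ σ c, IsSignedPerm f σ c := by
  set g : (V → Bool) → (V → Bool) := fun x => f x + f 0
  have hg : ∀ x y, hammingDist (g x) (g y) = hammingDist x y := fun x y => by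
    simp only [g, hammingDist_add_right, hf]
  have hg₀ : g 0 = 0 := funext fun i => BooleanRing.add_self (f 0 i)
  have hgnorm : ∀ x, hammingNorm (g x) = hammingNorm x := fun x => by
    rw [← hammingDist_zero_right, ← hg₀, hg, hammingDist_zero_right]
  have hsingle : ∀ j, ∃ i, g (Pi.single j 1) = Pi.single i 1 := fun j =>
    eq_single_of_hammingNorm_eq_one (by rw [hgnorm]; simp [hammingNorm, Pi.single_apply,
      Finset.filter_eq'])
  choose π hπ using hsingle
  have hgπ : ∀ x j, g x (π j) = x j := fun x j => by
    rw [Bool.eq_iff_iff, ← Bool.one_eq_true, ← hammingDist_single_lt_iff,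
      ← hammingDist_single_lt_iff, ← hπ, hg, hgnorm]
  have hπinj : Injective π := fun a b hab => by
    have := hgπ (Pi.single a 1) b
    rw [← hab, hgπ, Pi.single_eq_same] at this
    by_contra hba
    rw [Pi.single_eq_of_ne (Ne.symm hba)] at this
    exact absurd this (by decide)
  let e := Equiv.ofBijective π (Finite.injective_iff_bijective.mp hπinj)
  refine ⟨e.symm, f 0, fun x i => ?_⟩
  have := hgπ x (e.symm i)
  rw [Equiv.ofBijective_apply_symm_apply (f := π)] at this
  rw [← this]
  show f x i = f x i + f 0 i + f 0 i
  rw [add_assoc, BooleanRing.add_self, add_zero]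

end Isometries

/-- `f` is negative-circular (its global interaction graph is a cycle spanning all
vertices with an odd number of negative arcs) iff `f` is odd-self-dual and
non-expansive. -/
theorem stmt_15 {V : Type*} [Fintype V] [DecidableEq V]
    (f : (V → Bool) → (V → Bool)) :
    (∃ (σ : Equiv.Perm V) (s : V → Bool), IsCircularWith f σ s ∧ Odd (negCount s)) ↔
    (IsOddNet f ∧ SelfDual f ∧ NonExpansive f) := by
  constructor
  · rintro ⟨σ, s, hcirc, hodd⟩
    have h := hcirc.isSignedPerm
    exact ⟨h.isOddNet hcirc.1 ((odd_negCount_iff s).mp hodd), h.selfDual, h.nonExpansive⟩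
  · rintro ⟨hodd, hsd, hne⟩
    have hbij := Finite.injective_iff_bijective.mp (hsd.injective hne)
    obtain ⟨σ, c, h⟩ := exists_isSignedPerm_of_hammingDist_eq (hbij.map_eq_of_map_le hne)
    exact ⟨σ, c, ⟨h.exists_pow_apply_eq_of_isOddNet hodd, h.globalPos_iff, h.globalNeg_iff⟩,
      (odd_negCount_iff c).mpr (h.sum_eq_one_of_isOddNet hodd)⟩
end
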